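/- arXiv:1109.2172 — 3 statements merged into one kernel-verified Lean document; each statement's English description precedes it below -/
import Mathlib

section
/- Let 𝔤 be a Lie algebra over ℂ with a symmetric invariant bilinear form (·|·), let A be a commutative associative ℂ-algebra, let Ω¹_A be the module of Kähler differentials of A, and let Ω̄ = Ω¹_A / dA. Define on (A ⊗ 𝔤) ⊕ Ω̄ the bracket [f₁⊗g₁, f₂⊗g₂] = f₁f₂ ⊗ [g₁,g₂] + (g₁|g₂)·(class of f₂ df₁), with Ω̄ central. Then this bracket satisfies the Jacobi identity and antisymmetry, i.e. (A ⊗ 𝔤) ⊕ Ω̄ is a Lie algebra. -/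
open scoped TensorProduct

/-- The submodule of exact forms `dA ⊆ Ω¹_{A/ℂ}`. -/
noncomputable def ExactForms (A : Type*) [CommRing A] [Algebra ℂ A] :
    Submodule ℂ (Ω[A⁄ℂ]) :=
  Submodule.span ℂ (Set.range (KaehlerDifferential.D ℂ A))

/-- `Ω̄ = Ω¹_A / dA`. -/
noncomputable abbrev OmegaBar (A : Type*) [CommRing A] [Algebra ℂ A] :=
  (Ω[A⁄ℂ]) ⧸ ExactForms A

private lemma add_shuffle2 {M : Type*} [AddCommMonoid M] (a₁ a₂ b₁ b₂ : M)
    (h₁ : a₁ + a₂ = 0) (h₂ : b₁ + b₂ = 0) : (a₁ + b₁) + (a₂ + b₂) = 0 := by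
  calc (a₁ + b₁) + (a₂ + b₂) = (a₁ + a₂) + (b₁ + b₂) := by abel
  _ = 0 := by rw [h₁, h₂, add_zero]

private lemma add_shuffle3 {M : Type*} [AddCommMonoid M] (a₁ a₂ a₃ b₁ b₂ b₃ : M)
    (h₁ : a₁ + a₂ + a₃ = 0) (h₂ : b₁ + b₂ + b₃ = 0) :
    (a₁ + b₁) + (a₂ + b₂) + (a₃ + b₃) = 0 := by
  calc (a₁ + b₁) + (a₂ + b₂) + (a₃ + b₃) = (a₁ + a₂ + a₃) + (b₁ + b₂ + b₃) := by abel
  _ = 0 := by rw [h₁, h₂, add_zero]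

set_option maxHeartbeats 2000000 in
set_option synthInstance.maxHeartbeats 1000000 in
/-- The bracket `[f₁⊗g₁, f₂⊗g₂] = f₁f₂ ⊗ [g₁,g₂] + (g₁|g₂)·(class of f₂ df₁)`,
with `Ω̄ = Ω¹_A/dA` central, satisfies antisymmetry and the Jacobi identity, i.e.
`(A ⊗ 𝔤) ⊕ Ω̄` is a Lie algebra. -/
theorem centralExtension_isLieAlgebra
    {A : Type*} [CommRing A] [Algebra ℂ A]
    {L : Type*} [LieRing L] [LieAlgebra ℂ L]
    (κ : L →ₗ[ℂ] L →ₗ[ℂ] ℂ)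
    (hsymm : ∀ g₁ g₂ : L, κ g₁ g₂ = κ g₂ g₁)
    (hinv : ∀ g₁ g₂ g₃ : L, κ ⁅g₁, g₂⁆ g₃ = κ g₁ ⁅g₂, g₃⁆)
    (B : ((A ⊗[ℂ] L) × OmegaBar A) →ₗ[ℂ]
         ((A ⊗[ℂ] L) × OmegaBar A) →ₗ[ℂ] ((A ⊗[ℂ] L) × OmegaBar A))
    (hB : ∀ (f₁ f₂ : A) (g₁ g₂ : L),
      B (f₁ ⊗ₜ g₁, 0) (f₂ ⊗ₜ g₂, 0) =
        ((f₁ * f₂) ⊗ₜ ⁅g₁, g₂⁆,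
          κ g₁ g₂ • (Submodule.Quotient.mk (f₂ • KaehlerDifferential.D ℂ A f₁) :
            OmegaBar A)))
    (hcentral₁ : ∀ (ω : OmegaBar A) (y : (A ⊗[ℂ] L) × OmegaBar A),
      B (0, ω) y = 0)
    (hcentral₂ : ∀ (y : (A ⊗[ℂ] L) × OmegaBar A) (ω : OmegaBar A),
      B y (0, ω) = 0) :
    (∀ x y, B x y = - B y x) ∧
    (∀ x y z, B (B x y) z + B (B y z) x + B (B z x) y = 0) := by
  have hsplit : ∀ x : (A ⊗[ℂ] L) × OmegaBar A,
      x = (x.1, (0 : OmegaBar A)) + ((0 : A ⊗[ℂ] L), x.2) := by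
    intro x
    apply Prod.ext <;> simp
  have key : ∀ x y, B x y = B (x.1, 0) (y.1, 0) := by
    intro x y
    calc B x y = B ((x.1, 0) + (0, x.2)) ((y.1, 0) + (0, y.2)) := by rw [← hsplit, ← hsplit]
    _ = B (x.1, 0) ((y.1, 0) + (0, y.2)) := by
        rw [map_add B, LinearMap.add_apply, hcentral₁, add_zero]
    _ = B (x.1, 0) (y.1, 0) := by rw [map_add, hcentral₂, add_zero]
  have keyR : ∀ x y, B x y = B x (y.1, 0) := by
    intro x y
    calc B x y = B x ((y.1, 0) + (0, y.2)) := by rw [← hsplit]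
    _ = B x (y.1, 0) := by rw [map_add, hcentral₂, add_zero]
  -- compute the double bracket on pure tensors
  have hBB : ∀ (f₁ f₂ f₃ : A) (g₁ g₂ g₃ : L),
      B (B (f₁ ⊗ₜ g₁, 0) (f₂ ⊗ₜ g₂, 0)) (f₃ ⊗ₜ g₃, (0 : OmegaBar A)) =
        ((f₁ * f₂ * f₃) ⊗ₜ ⁅⁅g₁, g₂⁆, g₃⁆,
          κ ⁅g₁, g₂⁆ g₃ • (Submodule.Quotient.mk
            (f₃ • KaehlerDifferential.D ℂ A (f₁ * f₂)) : OmegaBar A)) := by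
    intro f₁ f₂ f₃ g₁ g₂ g₃
    rw [hB, key, hB]
  have mkD : ∀ a : A, (Submodule.Quotient.mk (KaehlerDifferential.D ℂ A a) : OmegaBar A) = 0 := by
    intro a
    exact (Submodule.Quotient.mk_eq_zero _).mpr (Submodule.subset_span ⟨a, rfl⟩)
  have e0 : ((0 : A ⊗[ℂ] L), (0 : OmegaBar A)) = 0 := rfl
  have eadd : ∀ s s' : A ⊗[ℂ] L,
      ((s + s' : A ⊗[ℂ] L), (0 : OmegaBar A)) = (s, 0) + (s', 0) := by
    intro s s'; apply Prod.ext <;> simp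
  -- antisymmetry on pure tensors
  have Asum : ∀ t₁ t₂ : A ⊗[ℂ] L, B (t₁, 0) (t₂, 0) + B (t₂, 0) (t₁, 0) = 0 := by
    intro t₁ t₂
    induction t₁ using TensorProduct.induction_on with
    | zero => simp [e0, hcentral₁]
    | add x y hx hy =>
      simp only [eadd, map_add, LinearMap.add_apply]
      exact add_shuffle2 _ _ _ _ hx hy
    | tmul f₁ g₁ =>
      induction t₂ using TensorProduct.induction_on with
      | zero => simp [e0, hcentral₁]
      | add x y hx hy =>
        simp only [eadd, map_add, LinearMap.add_apply]
        exact add_shuffle2 _ _ _ _ hx hy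
      | tmul f₂ g₂ =>
        rw [hB, hB, Prod.mk_add_mk, Prod.mk_eq_zero]
        constructor
        · rw [mul_comm f₂ f₁, ← TensorProduct.tmul_add,
            show ⁅g₁, g₂⁆ + ⁅g₂, g₁⁆ = 0 from by
              rw [← lie_skew g₁ g₂]; abel,
            TensorProduct.tmul_zero]
        · rw [hsymm g₂ g₁, ← smul_add, ← Submodule.Quotient.mk_add,
            show f₂ • KaehlerDifferential.D ℂ A f₁ + f₁ • KaehlerDifferential.D ℂ A f₂
              = KaehlerDifferential.D ℂ A (f₁ * f₂) from by
                rw [Derivation.leibniz]; abel,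
            mkD, smul_zero]
  -- Jacobi on pure tensors
  have Jsum : ∀ t₁ t₂ t₃ : A ⊗[ℂ] L,
      B (B (t₁, 0) (t₂, 0)) (t₃, 0) + B (B (t₂, 0) (t₃, 0)) (t₁, 0)
        + B (B (t₃, 0) (t₁, 0)) (t₂, 0) = 0 := by
    intro t₁ t₂ t₃
    induction t₁ using TensorProduct.induction_on with
    | zero => simp [e0, hcentral₁]
    | add x y hx hy =>
      simp only [eadd, map_add, LinearMap.add_apply]
      exact add_shuffle3 _ _ _ _ _ _ hx hy
    | tmul f₁ g₁ =>
      induction t₂ using TensorProduct.induction_on with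
      | zero => simp [e0, hcentral₁]
      | add x y hx hy =>
        simp only [eadd, map_add, LinearMap.add_apply]
        exact add_shuffle3 _ _ _ _ _ _ hx hy
      | tmul f₂ g₂ =>
        induction t₃ using TensorProduct.induction_on with
        | zero => simp [e0, hcentral₁]
        | add x y hx hy =>
          simp only [eadd, map_add, LinearMap.add_apply]
          exact add_shuffle3 _ _ _ _ _ _ hx hy
        | tmul f₃ g₃ =>
          rw [hBB, hBB, hBB, Prod.mk_add_mk, Prod.mk_add_mk, Prod.mk_eq_zero]
          constructor
          · rw [show f₂ * f₃ * f₁ = f₁ * f₂ * f₃ from by ring,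
              show f₃ * f₁ * f₂ = f₁ * f₂ * f₃ from by ring,
              ← TensorProduct.tmul_add, ← TensorProduct.tmul_add,
              show ⁅⁅g₁, g₂⁆, g₃⁆ + ⁅⁅g₂, g₃⁆, g₁⁆ + ⁅⁅g₃, g₁⁆, g₂⁆ = 0 from by
                rw [← lie_skew ⁅g₁, g₂⁆ g₃, ← lie_skew ⁅g₂, g₃⁆ g₁, ← lie_skew ⁅g₃, g₁⁆ g₂,
                  show -⁅g₃, ⁅g₁, g₂⁆⁆ + -⁅g₁, ⁅g₂, g₃⁆⁆ + -⁅g₂, ⁅g₃, g₁⁆⁆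
                    = -(⁅g₁, ⁅g₂, g₃⁆⁆ + ⁅g₂, ⁅g₃, g₁⁆⁆ + ⁅g₃, ⁅g₁, g₂⁆⁆) from by abel,
                  lie_jacobi, neg_zero],
              TensorProduct.tmul_zero]
          · rw [show κ ⁅g₂, g₃⁆ g₁ = κ ⁅g₁, g₂⁆ g₃ from by rw [hsymm, ← hinv],
              show κ ⁅g₃, g₁⁆ g₂ = κ ⁅g₁, g₂⁆ g₃ from by rw [hinv, hsymm],
              ← smul_add, ← smul_add, ← Submodule.Quotient.mk_add, ← Submodule.Quotient.mk_add,
              show f₃ • KaehlerDifferential.D ℂ A (f₁ * f₂)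
                  + f₁ • KaehlerDifferential.D ℂ A (f₂ * f₃)
                  + f₂ • KaehlerDifferential.D ℂ A (f₃ * f₁)
                = KaehlerDifferential.D ℂ A (f₁ * f₂ * f₃)
                  + KaehlerDifferential.D ℂ A (f₁ * f₂ * f₃) from by
                  simp only [Derivation.leibniz]; module,
              Submodule.Quotient.mk_add, mkD, add_zero, smul_zero]
  refine ⟨fun x y => ?_, fun x y z => ?_⟩
  · rw [key x y, key y x]
    exact eq_neg_of_add_eq_zero_left (Asum x.1 y.1)
  · rw [key x y, key y z, key z x, keyR _ z, keyR _ x, keyR _ y]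
    exact Jsum x.1 y.1 z.1
end

section
/- Let 𝔤 be a Lie algebra with a symmetric invariant bilinear form (·|·) and A a commutative ℂ-algebra. The map c: (A⊗𝔤) × (A⊗𝔤) → Ω¹_A/dA given by c(f₁⊗g₁, f₂⊗g₂) = (g₁|g₂)·(class of f₂ df₁) is a Lie-algebra 2-cocycle on the current algebra A⊗𝔤: it is antisymmetric and satisfies c([x,y],z) + c([y,z],x) + c([z,x],y) = 0. -/
open scoped TensorProduct

set_option synthInstance.maxHeartbeats 800000
set_option maxHeartbeats 1600000

lemma mk_D_zero {A : Type*} [CommRing A] [Algebra ℂ A] (f : A) :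
    (Submodule.Quotient.mk (KaehlerDifferential.D ℂ A f) : OmegaBar A) = 0 :=
  (Submodule.Quotient.mk_eq_zero _).mpr (Submodule.subset_span ⟨f, rfl⟩)

lemma mk_skew {A : Type*} [CommRing A] [Algebra ℂ A] (f₁ f₂ : A) :
    (Submodule.Quotient.mk (f₂ • KaehlerDifferential.D ℂ A f₁) : OmegaBar A) =
      - Submodule.Quotient.mk (f₁ • KaehlerDifferential.D ℂ A f₂) := by
  rw [eq_neg_iff_add_eq_zero, ← Submodule.Quotient.mk_add]
  have : f₂ • KaehlerDifferential.D ℂ A f₁ + f₁ • KaehlerDifferential.D ℂ A f₂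
      = KaehlerDifferential.D ℂ A (f₁ * f₂) := by
    rw [Derivation.leibniz]; abel
  rw [this, mk_D_zero]

/-- The map `c(f₁⊗g₁, f₂⊗g₂) = (g₁|g₂)·(class of f₂ df₁)` is a Lie-algebra 2-cocycle
on the current algebra `A ⊗ 𝔤`: it is antisymmetric and satisfies
`c([x,y],z) + c([y,z],x) + c([z,x],y) = 0`. -/
theorem currentAlgebra_cocycle
    {A : Type*} [CommRing A] [Algebra ℂ A]
    {L : Type*} [LieRing L] [LieAlgebra ℂ L]
    (κ : L →ₗ[ℂ] L →ₗ[ℂ] ℂ)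
    (hsymm : ∀ g₁ g₂ : L, κ g₁ g₂ = κ g₂ g₁)
    (hinv : ∀ g₁ g₂ g₃ : L, κ ⁅g₁, g₂⁆ g₃ = κ g₁ ⁅g₂, g₃⁆)
    (c : (A ⊗[ℂ] L) →ₗ[ℂ] (A ⊗[ℂ] L) →ₗ[ℂ] OmegaBar A)
    (hc : ∀ (f₁ f₂ : A) (g₁ g₂ : L),
      c (f₁ ⊗ₜ g₁) (f₂ ⊗ₜ g₂) =
        κ g₁ g₂ • (Submodule.Quotient.mk (f₂ • KaehlerDifferential.D ℂ A f₁) :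
          OmegaBar A)) :
    (∀ x y : A ⊗[ℂ] L, c x y = - c y x) ∧
    (∀ x y z : A ⊗[ℂ] L, c ⁅x, y⁆ z + c ⁅y, z⁆ x + c ⁅z, x⁆ y = 0) := by
  constructor
  · intro x y
    rw [eq_neg_iff_add_eq_zero]
    induction x using TensorProduct.induction_on with
    | zero => simp
    | add a b ha hb => simp only [map_add, LinearMap.add_apply]; have h := congrArg₂ (· + ·) ha hb; simp only [add_zero] at h; rw [← h]; abel
    | tmul f₁ g₁ =>
      induction y using TensorProduct.induction_on with
      | zero => simp
      | add a b ha hb => simp only [map_add, LinearMap.add_apply]; have h := congrArg₂ (· + ·) ha hb; simp only [add_zero] at h; rw [← h]; abel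
      | tmul f₂ g₂ =>
        rw [hc, hc, mk_skew f₂ f₁, hsymm g₂ g₁, smul_neg]
        abel
  · intro x y z
    induction x using TensorProduct.induction_on with
    | zero => simp
    | add a b ha hb =>
      simp only [add_lie, lie_add, map_add, LinearMap.add_apply]; have h := congrArg₂ (· + ·) ha hb; simp only [add_zero] at h; rw [← h]; abel
    | tmul f₁ g₁ =>
      induction y using TensorProduct.induction_on with
      | zero => simp
      | add a b ha hb =>
        simp only [add_lie, lie_add, map_add, LinearMap.add_apply]; have h := congrArg₂ (· + ·) ha hb; simp only [add_zero] at h; rw [← h]; abel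
      | tmul f₂ g₂ =>
        induction z using TensorProduct.induction_on with
        | zero => simp
        | add a b ha hb =>
          simp only [add_lie, lie_add, map_add, LinearMap.add_apply]; have h := congrArg₂ (· + ·) ha hb; simp only [add_zero] at h; rw [← h]; abel
        | tmul f₃ g₃ =>
          rw [LieAlgebra.ExtendScalars.bracket_tmul, LieAlgebra.ExtendScalars.bracket_tmul,
            LieAlgebra.ExtendScalars.bracket_tmul, hc, hc, hc]
          have e1 : κ ⁅g₁, g₂⁆ g₃ = κ g₁ ⁅g₂, g₃⁆ := hinv _ _ _
          have e2 : κ ⁅g₂, g₃⁆ g₁ = κ g₁ ⁅g₂, g₃⁆ := hsymm _ _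
          have e3 : κ ⁅g₃, g₁⁆ g₂ = κ g₁ ⁅g₂, g₃⁆ := by
            rw [hsymm, ← hinv, hsymm]
          rw [e1, e2, e3, ← smul_add, ← smul_add, ← Submodule.Quotient.mk_add,
            ← Submodule.Quotient.mk_add]
          have : f₃ • KaehlerDifferential.D ℂ A (f₁ * f₂)
              + f₁ • KaehlerDifferential.D ℂ A (f₂ * f₃)
              + f₂ • KaehlerDifferential.D ℂ A (f₃ * f₁)
              = KaehlerDifferential.D ℂ A (f₁ * f₂ * f₃)
              + KaehlerDifferential.D ℂ A (f₁ * f₂ * f₃) := by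
            simp only [Derivation.leibniz, smul_add, smul_smul]
            rw [mul_comm f₃ f₁, mul_comm f₃ f₂, mul_comm f₂ f₁]
            abel
          rw [this, Submodule.Quotient.mk_add, mk_D_zero, add_zero, smul_zero]
end

section
/- With J the Jacobian matrix (∂_r x̃_s)E_{rs} over a commutative ring A with derivation ∂̃_a, one has (∂̃_a J)·J⁻¹ = Σ_{s,p} (∂̃_a ∂_s x̃_k)(∂̃_k x_p) E_{sp}, and using the identity (∂̃_a ∂_s x̃_k)(∂̃_k x_p) + ∂_s ∂̃_a x_p = 0, it follows that (∂̃_a J)J⁻¹ = −Σ_{s,p} (∂_s ∂̃_a x_p) E_{sp}. -/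
/-- With `J = (∂_r x̃_s)E_{rs}` the Jacobian matrix of a coordinate change and
`J⁻¹ = (∂̃_s x_r)E_{sr}`, one has
`(∂̃_a J)·J⁻¹ = Σ_{s,p} (∂̃_a ∂_s x̃_k)(∂̃_k x_p) E_{sp}`, and, using the identity
`(∂̃_a ∂_s x̃_k)(∂̃_k x_p) + ∂_s ∂̃_a x_p = 0`, it follows that
`(∂̃_a J)J⁻¹ = −Σ_{s,p} (∂_s ∂̃_a x_p) E_{sp}`. -/
theorem jacobian_derivative_identity
    {A : Type*} [CommRing A] [Algebra ℂ A] {N : ℕ}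
    (x xt : Fin N → A)
    (D Dt : Fin N → Derivation ℂ A A)
    (hcomm : ∀ p q f, D p (D q f) = D q (D p f))
    (hchain1 : ∀ a f, Dt a f = ∑ p, Dt a (x p) * D p f)
    (hchain2 : ∀ b f, D b f = ∑ s, D b (xt s) * Dt s f)
    (hinv1 : ∀ a b, ∑ s, D b (xt s) * Dt s (x a) = if a = b then 1 else 0)
    (hinv2 : ∀ a b, ∑ p, Dt a (x p) * D p (xt b) = if a = b then 1 else 0)
    (K : Matrix (Fin N) (Fin N) A)
    (hK : K = Matrix.of fun s r => Dt s (x r)) :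
    ∀ a : Fin N,
      ((Matrix.of fun s k => Dt a (D s (xt k))) * K =
        Matrix.of fun s p => ∑ k, Dt a (D s (xt k)) * Dt k (x p)) ∧
      ((Matrix.of fun s k => Dt a (D s (xt k))) * K =
        - Matrix.of fun s p => D s (Dt a (x p))) := by
  intro a
  have hfirst : (Matrix.of fun s k => Dt a (D s (xt k))) * K =
      Matrix.of fun s p => ∑ k, Dt a (D s (xt k)) * Dt k (x p) := by
    ext s p
    simp [Matrix.mul_apply, hK]
  refine ⟨hfirst, ?_⟩
  rw [hfirst]
  ext s p
  simp only [Matrix.of_apply, Matrix.neg_apply]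
  -- `Dt a (xt k)` is a "constant"
  have hDtxt : ∀ k, Dt a (xt k) = if a = k then 1 else 0 := fun k => by
    rw [hchain1]; exact hinv2 a k
  have hDconst : ∀ k, D s (Dt a (xt k)) = 0 := by
    intro k
    rw [hDtxt k]
    split <;> simp
  -- key identity
  have key : ∀ k, Dt a (D s (xt k)) = -∑ q, D s (Dt a (x q)) * D q (xt k) := by
    intro k
    have h0 : D s (Dt a (xt k)) = 0 := hDconst k
    rw [hchain1 a (xt k)] at h0
    rw [map_sum] at h0
    have hsplit : ∀ q, D s (Dt a (x q) * D q (xt k)) =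
        D s (Dt a (x q)) * D q (xt k) + Dt a (x q) * D q (D s (xt k)) := by
      intro q
      rw [Derivation.leibniz, hcomm]
      simp only [smul_eq_mul]
      ring
    rw [Finset.sum_congr rfl (fun q _ => hsplit q), Finset.sum_add_distrib] at h0
    have := (hchain1 a (D s (xt k))).symm
    rw [this] at h0
    linear_combination h0
  calc ∑ k, Dt a (D s (xt k)) * Dt k (x p)
      = ∑ k, (-∑ q, D s (Dt a (x q)) * D q (xt k)) * Dt k (x p) := by
        exact Finset.sum_congr rfl fun k _ => by rw [key k]
    _ = -∑ q, D s (Dt a (x q)) * ∑ k, D q (xt k) * Dt k (x p) := by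
        simp only [neg_mul, Finset.sum_neg_distrib, Finset.sum_mul, Finset.mul_sum, mul_assoc]
        rw [Finset.sum_comm]
    _ = -D s (Dt a (x p)) := by
        have : ∀ q, (∑ k, D q (xt k) * Dt k (x p)) = if p = q then 1 else 0 :=
          fun q => hinv1 p q
        simp only [this, mul_ite, mul_one, mul_zero]
        simp
end
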